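/- Let M and N be von Neumann algebras and θ : P(M) → P(N) a projection ortho-isomorphism. If P₁, …, P_n are mutually orthogonal projections in M, then θ(P₁ + ⋯ + P_n) = θ(P₁) + ⋯ + θ(P_n). -/
import Mathlib


noncomputable section

namespace Stmt5

variable {H H' : Type*} [NormedAddCommGroup H] [InnerProductSpace ℂ H] [CompleteSpace H]
  [NormedAddCommGroup H'] [InnerProductSpace ℂ H'] [CompleteSpace H']

/-- The set of projections of the von Neumann algebra `M` (the projection lattice `P(M)`). -/
def projSet (M : VonNeumannAlgebra H) : Set (H →L[ℂ] H) :=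
  {P | P ∈ M ∧ P * P = P ∧ star P = P}

/-- A finite sum of mutually orthogonal projections of `M` is a projection of `M`. -/
lemma sum_mem_projSet (M : VonNeumannAlgebra H) {n : ℕ} (P : Fin n → (H →L[ℂ] H))
    (hP : ∀ i, P i ∈ projSet M) (horth : ∀ i j, i ≠ j → P i * P j = 0) :
    (∑ i, P i) ∈ projSet M := by
  refine ⟨sum_mem fun i _ => (hP i).1, ?_, ?_⟩
  · rw [Finset.sum_mul_sum]
    have h1 : ∀ i ∈ Finset.univ, (∑ j, P i * P j) = P i := by
      intro i _
      rw [Finset.sum_eq_single i (fun b _ hb => horth i b (Ne.symm hb)) (by simp)]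
      exact (hP i).2.1
    exact Finset.sum_congr rfl h1
  · rw [star_sum]
    exact Finset.sum_congr rfl fun i _ => (hP i).2.2

lemma one_sub_mem_projSet (M : VonNeumannAlgebra H) {q : H →L[ℂ] H} (hq : q ∈ projSet M) :
    (1 - q) ∈ projSet M := by
  refine ⟨sub_mem (one_mem M) hq.1, ?_, ?_⟩
  · rw [mul_sub, sub_mul, sub_mul, one_mul, mul_one, hq.2.1]
    abel
  · rw [star_sub, star_one, hq.2.2]

/-- `p ≤ q` (i.e. `p * q = p`) is characterized by orthogonality relations within `M`. -/
lemma le_iff_ortho (M : VonNeumannAlgebra H) {p q : H →L[ℂ] H}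
    (hp : p ∈ projSet M) (hq : q ∈ projSet M) :
    p * q = p ↔ ∀ r, r ∈ projSet M → r * q = 0 → r * p = 0 := by
  constructor
  · intro h r _ hrq
    have hqp : q * p = p := by
      have h2 : star (p * q) = star p := by rw [h]
      rwa [star_mul, hp.2.2, hq.2.2] at h2
    rw [← hqp, ← mul_assoc, hrq, zero_mul]
  · intro h
    have h0 : (1 - q) * q = 0 := by
      rw [sub_mul, one_mul, hq.2.1, sub_self]
    have h1 := h (1 - q) (one_sub_mem_projSet M hq) h0
    rw [sub_mul, one_mul, sub_eq_zero] at h1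
    have hqp : q * p = p := h1.symm
    calc p * q = star (q * p) := by rw [star_mul, hp.2.2, hq.2.2]
    _ = p := by rw [hqp, hp.2.2]

/-- A projection ortho-isomorphism `θ : P(M) → P(N)` is additive on
finite families of mutually orthogonal projections: `θ (P₁ + ⋯ + Pₙ) = θ P₁ + ⋯ + θ Pₙ`. -/
theorem stmt5 (M : VonNeumannAlgebra H) (N : VonNeumannAlgebra H')
    (θ : projSet M → projSet N) (hbij : Function.Bijective θ)
    (hortho : ∀ P Q : projSet M,
      (P : H →L[ℂ] H) * (Q : H →L[ℂ] H) = 0 ↔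
        (θ P : H' →L[ℂ] H') * (θ Q : H' →L[ℂ] H') = 0)
    (n : ℕ) (P : Fin n → projSet M)
    (horth : ∀ i j, i ≠ j → (P i : H →L[ℂ] H) * (P j : H →L[ℂ] H) = 0) :
    (θ ⟨∑ i, (P i : H →L[ℂ] H),
        sum_mem_projSet M (fun i => (P i : H →L[ℂ] H)) (fun i => (P i).2) horth⟩ :
      H' →L[ℂ] H') = ∑ i, (θ (P i) : H' →L[ℂ] H') := by
  obtain ⟨hinj, hsurj⟩ := hbij
  set S : projSet M := ⟨∑ i, (P i : H →L[ℂ] H),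
      sum_mem_projSet M (fun i => (P i : H →L[ℂ] H)) (fun i => (P i).2) horth⟩ with hSdef
  -- θ preserves the order
  have key : ∀ p q : projSet M,
      (p : H →L[ℂ] H) * (q : H →L[ℂ] H) = p →
      (θ p : H' →L[ℂ] H') * (θ q : H' →L[ℂ] H') = θ p := by
    intro p q hpq
    rw [le_iff_ortho N (θ p).2 (θ q).2]
    intro r' hr' hr'q
    obtain ⟨r, hr⟩ := hsurj ⟨r', hr'⟩
    have hrq : (r : H →L[ℂ] H) * (q : H →L[ℂ] H) = 0 :=
      (hortho r q).2 (by rw [hr]; exact hr'q)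
    have hrp : (r : H →L[ℂ] H) * (p : H →L[ℂ] H) = 0 :=
      ((le_iff_ortho M p.2 q.2).1 hpq) r r.2 hrq
    have := (hortho r p).1 hrp
    rwa [hr] at this
  -- the images are orthogonal
  have Qorth : ∀ i j, i ≠ j →
      (θ (P i) : H' →L[ℂ] H') * (θ (P j) : H' →L[ℂ] H') = 0 :=
    fun i j h => (hortho _ _).1 (horth i j h)
  have hT : (∑ i, (θ (P i) : H' →L[ℂ] H')) ∈ projSet N :=
    sum_mem_projSet N (fun i => (θ (P i) : H' →L[ℂ] H')) (fun i => (θ (P i)).2) Qorth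
  -- each P i ≤ S
  have hPS : ∀ i, (P i : H →L[ℂ] H) * (S : H →L[ℂ] H) = P i := by
    intro i
    show (P i : H →L[ℂ] H) * (∑ j, (P j : H →L[ℂ] H)) = P i
    rw [Finset.mul_sum,
      Finset.sum_eq_single i (fun b _ hb => horth i b (Ne.symm hb)) (by simp)]
    exact (P i).2.2.1
  -- hence θ (P i) ≤ θ S, so T ≤ θ S
  have hTle : (∑ i, (θ (P i) : H' →L[ℂ] H')) * (θ S : H' →L[ℂ] H')
      = ∑ i, (θ (P i) : H' →L[ℂ] H') := by
    rw [Finset.sum_mul]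
    exact Finset.sum_congr rfl fun i _ => key (P i) S (hPS i)
  -- θ S ≤ T
  have hleT : (θ S : H' →L[ℂ] H') * (∑ i, (θ (P i) : H' →L[ℂ] H')) = θ S := by
    rw [le_iff_ortho N (θ S).2 hT]
    intro r' hr' hr'T
    -- r' * θ (P i) = 0 for each i
    have hri : ∀ i, r' * (θ (P i) : H' →L[ℂ] H') = 0 := by
      intro i
      have hiT : (θ (P i) : H' →L[ℂ] H') * (∑ j, (θ (P j) : H' →L[ℂ] H'))
          = θ (P i) := by
        rw [Finset.mul_sum,
          Finset.sum_eq_single i (fun b _ hb => Qorth i b (Ne.symm hb)) (by simp)]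
        exact (θ (P i)).2.2.1
      have hTi : (∑ j, (θ (P j) : H' →L[ℂ] H')) * (θ (P i) : H' →L[ℂ] H')
          = θ (P i) := by
        have h2 : star ((θ (P i) : H' →L[ℂ] H') * (∑ j, (θ (P j) : H' →L[ℂ] H')))
            = star (θ (P i) : H' →L[ℂ] H') := by rw [hiT]
        rwa [star_mul, (θ (P i)).2.2.2, hT.2.2] at h2
      rw [← hTi, ← mul_assoc, hr'T, zero_mul]
    obtain ⟨r, hr⟩ := hsurj ⟨r', hr'⟩
    have hrPi : ∀ i, (r : H →L[ℂ] H) * (P i : H →L[ℂ] H) = 0 := by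
      intro i
      exact (hortho r (P i)).2 (by rw [hr]; exact hri i)
    have hrS : (r : H →L[ℂ] H) * (S : H →L[ℂ] H) = 0 := by
      show (r : H →L[ℂ] H) * (∑ j, (P j : H →L[ℂ] H)) = 0
      rw [Finset.mul_sum]
      exact Finset.sum_eq_zero fun i _ => hrPi i
    have := (hortho r S).1 hrS
    rwa [hr] at this
  -- combine: θ S = T
  have h1 : star ((∑ i, (θ (P i) : H' →L[ℂ] H')) * (θ S : H' →L[ℂ] H'))
      = star (∑ i, (θ (P i) : H' →L[ℂ] H')) := by rw [hTle]
  rw [star_mul, hT.2.2, (θ S).2.2.2] at h1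
  -- h1 : θ S * T = T ; hleT : θ S * T = θ S
  rw [← hleT, h1]
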